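/- arXiv:2301.11230 — 2 statements merged into one kernel-verified Lean document; each statement's English description precedes it below -/
import Mathlib

section
/- There exists a ring homomorphism D' : R' → R' satisfying D'(t) = t⁻¹, D'(s) = s⁻¹, and D'(x) = t⁻²s⁻¹·x; moreover D' ∘ D' is the identity map of R', so D' is a ring automorphism of R' of order two. -/
/-!
The substitution `s ↦ s⁻¹, t ↦ t⁻¹, x ↦ t⁻²s⁻¹x` respects the defining relation, since
`(t⁻²s⁻¹x)³ = t⁻⁶s⁻³ · 2t²sx = 2t⁻²s⁻¹ · (t⁻²s⁻¹x)`, so it induces an endomorphism `D'` of `R'`.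
Applying it twice fixes `s`, `t` and `x` (e.g. `x ↦ t²s · t⁻²s⁻¹x = x`), hence `D' ∘ D' = id`.
-/

open MvPolynomial

noncomputable section

def boRel' : Ideal (MvPolynomial (Fin 5) ℤ) :=
  Ideal.span
    { X 0 * X 1 - 1,
      X 2 * X 3 - 1,
      X 4 ^ 3 - 2 * X 2 ^ 2 * X 0 * X 4 }

def R' : Type := MvPolynomial (Fin 5) ℤ ⧸ boRel'

instance : CommRing R' := inferInstanceAs (CommRing (MvPolynomial (Fin 5) ℤ ⧸ boRel'))

/-- the element `s` of `R'` -/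
def s : R' := Ideal.Quotient.mk boRel' (X 0)
/-- the element `s⁻¹` of `R'` -/
def si : R' := Ideal.Quotient.mk boRel' (X 1)
/-- the element `t` of `R'` -/
def t : R' := Ideal.Quotient.mk boRel' (X 2)
/-- the element `t⁻¹` of `R'` -/
def ti : R' := Ideal.Quotient.mk boRel' (X 3)
/-- the element `x` of `R'` -/
def x : R' := Ideal.Quotient.mk boRel' (X 4)

namespace R'

lemma mk_eq_zero_of_mem_boRel' {p : MvPolynomial (Fin 5) ℤ}
    (hp : p ∈ ({X 0 * X 1 - 1, X 2 * X 3 - 1, X 4 ^ 3 - 2 * X 2 ^ 2 * X 0 * X 4} :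
      Set (MvPolynomial (Fin 5) ℤ))) :
    Ideal.Quotient.mk boRel' p = 0 :=
  Ideal.Quotient.eq_zero_iff_mem.mpr (Ideal.subset_span hp)

lemma s_mul_si : s * si = 1 := by
  have h := mk_eq_zero_of_mem_boRel' (p := X 0 * X 1 - 1) (by simp)
  rwa [map_sub, map_mul, map_one, sub_eq_zero] at h

lemma t_mul_ti : t * ti = 1 := by
  have h := mk_eq_zero_of_mem_boRel' (p := X 2 * X 3 - 1) (by simp)
  rwa [map_sub, map_mul, map_one, sub_eq_zero] at h

lemma x_pow_three : x ^ 3 = 2 * t ^ 2 * s * x := by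
  have h := mk_eq_zero_of_mem_boRel' (p := X 4 ^ 3 - 2 * X 2 ^ 2 * X 0 * X 4) (by simp)
  rwa [map_sub, map_mul, map_mul, map_mul, map_pow, map_pow, map_ofNat, sub_eq_zero] at h

section UniversalProperty

variable {A : Type*} [CommRing A]

def lift (a a' b b' y : A) (ha : a * a' = 1) (hb : b * b' = 1)
    (hy : y ^ 3 = 2 * b ^ 2 * a * y) : R' →+* A :=
  Ideal.Quotient.lift boRel' (eval₂Hom (Int.castRingHom A) ![a, a', b, b', y]) fun p hp => by
    refine (Ideal.span_le (I := RingHom.ker _)).mpr ?_ hp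
    rintro q (rfl | rfl | rfl) <;> simp [RingHom.mem_ker, ha, hb, hy]

variable {a a' b b' y : A} {ha : a * a' = 1} {hb : b * b' = 1} {hy : y ^ 3 = 2 * b ^ 2 * a * y}

lemma lift_mk (p : MvPolynomial (Fin 5) ℤ) :
    lift a a' b b' y ha hb hy (Ideal.Quotient.mk boRel' p) =
      eval₂Hom (Int.castRingHom A) ![a, a', b, b', y] p :=
  Ideal.Quotient.lift_mk _ _ _

@[simp] lemma lift_s : lift a a' b b' y ha hb hy s = a := by rw [s, lift_mk]; simp
@[simp] lemma lift_si : lift a a' b b' y ha hb hy si = a' := by rw [si, lift_mk]; simp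
@[simp] lemma lift_t : lift a a' b b' y ha hb hy t = b := by rw [t, lift_mk]; simp
@[simp] lemma lift_ti : lift a a' b b' y ha hb hy ti = b' := by rw [ti, lift_mk]; simp
@[simp] lemma lift_x : lift a a' b b' y ha hb hy x = y := by rw [x, lift_mk]; simp

lemma ringHom_ext {f g : R' →+* A} (hs : f s = g s) (hsi : f si = g si) (ht : f t = g t)
    (hti : f ti = g ti) (hx : f x = g x) : f = g := by
  refine Ideal.Quotient.ringHom_ext (MvPolynomial.ringHom_ext' (RingHom.ext_int _ _) ?_)
  intro i
  fin_cases i <;> assumption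

end UniversalProperty

def duality : R' →+* R' :=
  lift si s ti t (ti ^ 2 * si * x) (by rw [mul_comm, s_mul_si]) (by rw [mul_comm, t_mul_ti])
    (by
      linear_combination (ti ^ 6 * si ^ 3) * x_pow_three +
        (2 * ti ^ 6 * si ^ 2 * t ^ 2 * x) * s_mul_si +
        (2 * ti ^ 4 * si ^ 2 * x * (t * ti + 1)) * t_mul_ti)

lemma duality_duality_x : duality (duality x) = x := by
  simp only [duality, lift_x, map_mul, map_pow, lift_ti, lift_si]
  linear_combination (x * ti ^ 2 * t ^ 2) * s_mul_si + (x * (t * ti + 1)) * t_mul_ti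

end R'

/-- There is a ring homomorphism `D' : R' → R'` with `D'(t) = t⁻¹`, `D'(s) = s⁻¹`,
`D'(x) = t⁻²s⁻¹·x`, and `D' ∘ D' = id`, so `D'` is a ring automorphism of `R'` of order two. -/
theorem exists_duality' :
    ∃ D : R' →+* R',
      D t = ti ∧ D s = si ∧ D x = ti ^ 2 * si * x ∧
      D.comp D = RingHom.id R' := by
  refine ⟨R'.duality, R'.lift_t, R'.lift_s, R'.lift_x, R'.ringHom_ext ?_ ?_ ?_ ?_
    R'.duality_duality_x⟩ <;> simp [R'.duality]

end
end

section
/- For every j ≥ 0, the element f'_j ∈ R' can be written in the form f'_j = Σ_i (a_{i,j}·sⁱtʲ + b_{i,j}·sⁱt^{j−1}·x + c_{i,j}·sⁱt^{j−2}·x²) where the a_{i,j}, b_{i,j}, c_{i,j} are nonnegative integers, only finitely many of which are nonzero; and when j is odd one may take all a_{i,j} = 0, i.e. f'_j = Σ_i (b_{i,j}·sⁱt^{j−1}·x + c_{i,j}·sⁱt^{j−2}·x²) with b_{i,j}, c_{i,j} nonnegative integers. -/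
/-!
The ring `R' = ℤ[s^{±1}, t^{±1}, x] / (x³ = 2t²sx)` is modeled as a quotient of the
polynomial ring `ℤ[s, s', t, t', x]` (variables indexed by `Fin 5`: `0 ↦ s`, `1 ↦ s⁻¹`,
`2 ↦ t`, `3 ↦ t⁻¹`, `4 ↦ x`) by the ideal generated by `s·s' − 1`, `t·t' − 1` (making `s` and
`t` invertible) and the defining relation `x³ − 2t²sx`.
-/

open MvPolynomial

noncomputable section

lemma s_mul_si : s * si = 1 := by
  show Ideal.Quotient.mk boRel' (X 0) * Ideal.Quotient.mk boRel' (X 1) = 1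
  rw [← map_mul, ← map_one (Ideal.Quotient.mk boRel'), Ideal.Quotient.mk_eq_mk_iff_sub_mem]
  exact Ideal.subset_span (by simp)

lemma t_mul_ti : t * ti = 1 := by
  show Ideal.Quotient.mk boRel' (X 2) * Ideal.Quotient.mk boRel' (X 3) = 1
  rw [← map_mul, ← map_one (Ideal.Quotient.mk boRel'), Ideal.Quotient.mk_eq_mk_iff_sub_mem]
  exact Ideal.subset_span (by simp)

/-- `s` as a unit of `R'`. -/
def sU : R'ˣ := ⟨s, si, s_mul_si, by rw [mul_comm]; exact s_mul_si⟩

/-- `t` as a unit of `R'`. -/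
def tU : R'ˣ := ⟨t, ti, t_mul_ti, by rw [mul_comm]; exact t_mul_ti⟩

/-
Write `f'_j = A·tʲ + B·t^{j-1}·x + C·t^{j-2}·x²` with `A, B, C` nonnegative integer
combinations of powers of `s`. Multiplying by `s` or by a power of `t` preserves this shape
(shifting the exponents), and multiplying by `x` does too thanks to `x³ = 2t²sx`:
`x·(A·tᵉ + B·t^{e-1}·x + C·t^{e-2}·x²) = (A + 2sC)·tᵉ·x + B·t^{e-1}·x²`, which has no `x⁰` part.
Strong induction along the recursion then gives the form, with `A = 0` at odd indices.
-/

section UnitPowers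

variable {R : Type*} [CommSemiring R]

theorem Units.val_mul_linearCombination_zpow (u : Rˣ) (a : ℤ →₀ ℕ) :
    (u : R) * Finsupp.linearCombination ℕ (fun i : ℤ => ((u ^ i : Rˣ) : R)) a =
      Finsupp.linearCombination ℕ (fun i : ℤ => ((u ^ i : Rˣ) : R)) (a.mapDomain (· + 1)) := by
  rw [Finsupp.linearCombination_mapDomain, Finsupp.linearCombination_apply,
    Finsupp.linearCombination_apply, Finsupp.mul_sum]
  refine Finsupp.sum_congr fun i _ => ?_
  rw [Function.comp_apply, zpow_add_one, Units.val_mul, mul_smul_comm, mul_comm]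

theorem Units.pow_mul_val_zpow (u : Rˣ) (m : ℕ) (e : ℤ) :
    (u : R) ^ m * ((u ^ e : Rˣ) : R) = ((u ^ (e + m) : Rˣ) : R) := by
  rw [zpow_add, zpow_natCast, Units.val_mul, Units.val_pow_eq_pow_val, mul_comm]

end UnitPowers

theorem x_pow_three : x ^ 3 = 2 * t ^ 2 * s * x := by
  have h : Ideal.Quotient.mk boRel' ((X 4 : MvPolynomial (Fin 5) ℤ) ^ 3) =
      Ideal.Quotient.mk boRel' (2 * X 2 ^ 2 * X 0 * X 4) := by
    rw [Ideal.Quotient.mk_eq_mk_iff_sub_mem]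
    exact Ideal.subset_span (by simp)
  rw [map_pow, map_mul, map_mul, map_mul, map_pow, map_ofNat] at h
  exact h

def sPoly : (ℤ →₀ ℕ) →ₗ[ℕ] R' :=
  Finsupp.linearCombination ℕ fun i : ℤ => ((sU ^ i : R'ˣ) : R')

theorem s_mul_sPoly (a : ℤ →₀ ℕ) : s * sPoly a = sPoly (a.mapDomain (· + 1)) :=
  sU.val_mul_linearCombination_zpow a

theorem t_pow_mul_tU_zpow (m : ℕ) (e : ℤ) :
    t ^ m * ((tU ^ e : R'ˣ) : R') = ((tU ^ (e + m) : R'ˣ) : R') :=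
  tU.pow_mul_val_zpow m e

def IsReducedForm (y : R') (e : ℤ) (a b c : ℤ →₀ ℕ) : Prop :=
  y = sPoly a * ((tU ^ e : R'ˣ) : R') + sPoly b * ((tU ^ (e - 1) : R'ˣ) : R') * x +
    sPoly c * ((tU ^ (e - 2) : R'ˣ) : R') * x ^ 2

theorem isReducedForm_one : IsReducedForm 1 0 (Finsupp.single 0 1) 0 0 := by
  simp [IsReducedForm, sPoly]

theorem isReducedForm_x : IsReducedForm x 1 0 (Finsupp.single 0 1) 0 := by
  simp [IsReducedForm, sPoly]

namespace IsReducedForm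

variable {y z : R'} {e : ℤ} {a b c a' b' c' : ℤ →₀ ℕ}

theorem add (hy : IsReducedForm y e a b c) (hz : IsReducedForm z e a' b' c') :
    IsReducedForm (y + z) e (a + a') (b + b') (c + c') := by
  rw [IsReducedForm, hy, hz, map_add, map_add, map_add]
  ring

theorem t_pow_mul (hy : IsReducedForm y e a b c) (m : ℕ) {e' : ℤ} (he : e + m = e') :
    IsReducedForm (t ^ m * y) e' a b c := by
  rw [IsReducedForm, hy, ← he, ← sub_add_eq_add_sub, ← sub_add_eq_add_sub,
    ← t_pow_mul_tU_zpow, ← t_pow_mul_tU_zpow, ← t_pow_mul_tU_zpow]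
  ring

theorem s_mul (hy : IsReducedForm y e a b c) :
    IsReducedForm (s * y) e (a.mapDomain (· + 1)) (b.mapDomain (· + 1)) (c.mapDomain (· + 1)) := by
  rw [IsReducedForm, hy, ← s_mul_sPoly, ← s_mul_sPoly, ← s_mul_sPoly]
  ring

theorem x_mul (hy : IsReducedForm y e a b c) :
    IsReducedForm (x * y) (e + 1) 0 (a + (c.mapDomain (· + 1) + c.mapDomain (· + 1))) b := by
  rw [IsReducedForm, hy, map_zero, map_add, map_add, ← s_mul_sPoly, add_sub_cancel_right,
    show e + 1 - 2 = e - 1 by ring]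
  have ht : ((tU ^ e : R'ˣ) : R') = t ^ 2 * ((tU ^ (e - 2) : R'ˣ) : R') := by
    rw [t_pow_mul_tU_zpow, Nat.cast_ofNat, sub_add_cancel]
  rw [ht]
  linear_combination (sPoly c * ((tU ^ (e - 2) : R'ˣ) : R')) * x_pow_three

theorem eq_sum (hy : IsReducedForm y e a b c) :
    y = (a.sum fun i n => (n : R') * ((sU ^ i : R'ˣ) : R') * ((tU ^ e : R'ˣ) : R')) +
      (b.sum fun i n => (n : R') * ((sU ^ i : R'ˣ) : R') * ((tU ^ (e - 1) : R'ˣ) : R') * x) +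
      (c.sum fun i n => (n : R') * ((sU ^ i : R'ˣ) : R') * ((tU ^ (e - 2) : R'ˣ) : R') * x ^ 2) := by
  simpa only [IsReducedForm, sPoly, Finsupp.linearCombination_apply, Finsupp.sum_mul, nsmul_eq_mul]
    using hy

end IsReducedForm

/-- For every `j ≥ 0`, the element `f'_j ∈ R'` (defined recursively by `f'₀ = 1`, `f'₁ = x`,
`f'_{2j+1} = tʲ·x·f'_j` for `j ≥ 1` and `f'_{2j} = tʲ·f'_j + t^{j+1}·s·f'_{j−1}` for `j ≥ 1`)
can be written as `f'_j = Σ_i (a_{i,j}·sⁱtʲ + b_{i,j}·sⁱt^{j−1}·x + c_{i,j}·sⁱt^{j−2}·x²)`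
with the `a_{i,j}, b_{i,j}, c_{i,j}` nonnegative integers, only finitely many nonzero;
moreover when `j` is odd one may take all `a_{i,j} = 0`. -/
theorem f'_reduced_form (f : ℕ → R') (h0 : f 0 = 1) (h1 : f 1 = x)
    (hodd : ∀ j : ℕ, 1 ≤ j → f (2 * j + 1) = t ^ j * x * f j)
    (heven : ∀ j : ℕ, 1 ≤ j → f (2 * j) = t ^ j * f j + t ^ (j + 1) * s * f (j - 1)) :
    ∀ j : ℕ, ∃ a b c : ℤ →₀ ℕ,
      f j =
        (a.sum fun i n => (n : R') * ((sU ^ i : R'ˣ) : R') * ((tU ^ (j : ℤ) : R'ˣ) : R'))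
        + (b.sum fun i n =>
            (n : R') * ((sU ^ i : R'ˣ) : R') * ((tU ^ ((j : ℤ) - 1) : R'ˣ) : R') * x)
        + (c.sum fun i n =>
            (n : R') * ((sU ^ i : R'ˣ) : R') * ((tU ^ ((j : ℤ) - 2) : R'ˣ) : R') * x ^ 2)
      ∧ (Odd j → a = 0) := by
  intro j
  suffices ∃ a b c, IsReducedForm (f j) j a b c ∧ (Odd j → a = 0) by
    obtain ⟨a, b, c, hf, ha⟩ := this
    exact ⟨a, b, c, hf.eq_sum, ha⟩
  induction j using Nat.strong_induction_on with
  | _ j ih =>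
  obtain ⟨k, rfl | rfl⟩ := Nat.even_or_odd' j
  · have h2k : ¬Odd (2 * k) := Nat.not_odd_iff_even.2 (even_two_mul k)
    rcases Nat.eq_zero_or_pos k with rfl | hk
    · exact ⟨_, _, _, h0 ▸ isReducedForm_one, fun h => absurd h h2k⟩
    obtain ⟨a, b, c, hfk, -⟩ := ih k (by omega)
    obtain ⟨a', b', c', hfk', -⟩ := ih (k - 1) (by omega)
    rw [heven k hk, mul_assoc]
    exact ⟨_, _, _, (hfk.t_pow_mul k (by omega)).add (hfk'.s_mul.t_pow_mul (k + 1) (by omega)),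
      fun h => absurd h h2k⟩
  · rcases Nat.eq_zero_or_pos k with rfl | hk
    · exact ⟨_, _, _, h1 ▸ isReducedForm_x, fun _ => rfl⟩
    obtain ⟨a, b, c, hfk, -⟩ := ih k (by omega)
    rw [hodd k hk, mul_assoc]
    exact ⟨_, _, _, hfk.x_mul.t_pow_mul k (by omega), fun _ => rfl⟩

end
end
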